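/- Let d be a nonnegative travel-time function on N = {0} ∪ C with d(i,i) = 0 that satisfies the triangle inequality d(i,j) ≤ d(i,l) + d(l,j) for all i, l, j ∈ N, let all processing times be zero (p_c = 0 for every customer c), and let the vehicle capacity satisfy k ≥ n. Then the optimal (minimum) makespan over all feasible VRP-RPD schedules equals the min-max VRP value. (This is the correctness of the reduction used in the paper's NP-hardness proof: with zero processing times and non-binding capacity, VRP-RPD coincides with the min-max VRP.) -/

import Mathlib

namespace VRPRPD

/-- The kind of an operation at a customer: a dropoff or a pickup. -/
inductive OpKind : Type
  | drop
  | pick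
deriving DecidableEq

/-- One scheduled operation of a vehicle: the customer served, the kind of
operation, and the arrival and departure times of the vehicle at the customer. -/
structure Entry (n : ℕ) : Type where
  cust : Fin n
  kind : OpKind
  arr : ℝ
  dep : ℝ

/-- A schedule assigns to each of the `m` vehicles a finite sequence of
timed operations. -/
abbrev Schedule (n m : ℕ) : Type := Fin m → List (Entry n)

/-- The location of customer `c` in `N = {0} ∪ C`, where the depot is `0` and
customer `c` is coded as location `c + 1` in `Fin (n+1)`. -/
def loc {n : ℕ} (c : Fin n) : Fin (n + 1) := c.succ

/-- Total number of operations of kind `k` performed at customer `c` over all vehicles. -/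
def countOp {n m : ℕ} (S : Schedule n m) (c : Fin n) (k : OpKind) : ℕ :=
  ∑ v : Fin m, (S v).countP (fun e => decide (e.cust = c ∧ e.kind = k))

/-- The load (number of resources carried) of a vehicle after performing the
operations in the list `l`, having started at the depot with `kcap` resources:
a dropoff decreases the load by one, a pickup increases it by one. -/
def loadAfter {n : ℕ} (kcap : ℕ) (l : List (Entry n)) : ℤ :=
  (kcap : ℤ) - (l.countP (fun e => decide (e.kind = OpKind.drop)) : ℤ)
    + (l.countP (fun e => decide (e.kind = OpKind.pick)) : ℤ)

/-- Feasibility of a VRP-RPD schedule for travel times `d`, processing times `p`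
and vehicle capacity `kcap`: each customer gets exactly one dropoff and one pickup
(possibly by different vehicles); each vehicle starts at the depot at time `0`
carrying `kcap` resources and travels between consecutive operation locations
taking at least the corresponding travel time (waiting allowed); the load stays
between `0` and `kcap` along each route (so a dropoff requires load at least one
and a pickup load at most `kcap - 1`); and the pickup of customer `c` (which
occurs at the departure of the pickup vehicle) happens no earlier than `p c` time
units after its dropoff (which occurs at the arrival of the dropoff vehicle). -/
structure Feasible {n m : ℕ} (d : Fin (n + 1) → Fin (n + 1) → ℝ) (p : Fin n → ℝ)
    (kcap : ℕ) (S : Schedule n m) : Prop where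
  drop_once : ∀ c : Fin n, countOp S c OpKind.drop = 1
  pick_once : ∀ c : Fin n, countOp S c OpKind.pick = 1
  arr_le_dep : ∀ v : Fin m, ∀ e ∈ S v, e.arr ≤ e.dep
  first_arr : ∀ v : Fin m, ∀ e ∈ (S v).head?, d 0 (loc e.cust) ≤ e.arr
  travel : ∀ v : Fin m, ∀ r : ℕ, (h : r + 1 < (S v).length) →
    ((S v).get ⟨r, Nat.lt_of_succ_lt h⟩).dep
      + d (loc ((S v).get ⟨r, Nat.lt_of_succ_lt h⟩).cust)
          (loc ((S v).get ⟨r + 1, h⟩).cust)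
      ≤ ((S v).get ⟨r + 1, h⟩).arr
  load_nonneg : ∀ v : Fin m, ∀ r : ℕ, 0 ≤ loadAfter kcap ((S v).take r)
  load_le_cap : ∀ v : Fin m, ∀ r : ℕ, loadAfter kcap ((S v).take r) ≤ (kcap : ℤ)
  precedence : ∀ (c : Fin n) (v w : Fin m) (eD eP : Entry n),
    eD ∈ S v → eP ∈ S w → eD.cust = c → eD.kind = OpKind.drop →
    eP.cust = c → eP.kind = OpKind.pick → eD.arr + p c ≤ eP.dep

/-- The time at which vehicle `v` returns to the depot: the departure time from
its last operation plus the travel time back to the depot (`0` if the vehicle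
performs no operation and stays at the depot). -/
def returnTime {n m : ℕ} (d : Fin (n + 1) → Fin (n + 1) → ℝ) (S : Schedule n m)
    (v : Fin m) : ℝ :=
  match (S v).getLast? with
  | none => 0
  | some e => e.dep + d (loc e.cust) 0

/-- The makespan of a schedule: the maximum over vehicles of the depot return time. -/
def makespan {n m : ℕ} (d : Fin (n + 1) → Fin (n + 1) → ℝ) (S : Schedule n m) : ℝ :=
  ((List.finRange m).map (returnTime d S)).foldr max 0

/-- Length of a path through a list of locations: the sum of the travel times of
consecutive pairs. -/
def pathLen {n : ℕ} (d : Fin (n + 1) → Fin (n + 1) → ℝ) : List (Fin (n + 1)) → ℝ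
  | [] => 0
  | [_] => 0
  | a :: b :: rest => d a b + pathLen d (b :: rest)

/-- Tour length of an ordered sequence `c₁, …, c_L` of customers:
`d(0,c₁) + Σ d(cᵢ,cᵢ₊₁) + d(c_L,0)`, and `0` for the empty sequence. -/
def tourLen {n : ℕ} (d : Fin (n + 1) → Fin (n + 1) → ℝ) (l : List (Fin n)) : ℝ :=
  match l with
  | [] => 0
  | _ => pathLen d ((0 : Fin (n + 1)) :: l.map loc ++ [(0 : Fin (n + 1))])

/-- `routes` is a partition of the `n` customers into at most `m` ordered
sequences: every customer occurs exactly once among all the sequences. -/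
def IsPartition {n m : ℕ} (routes : Fin m → List (Fin n)) : Prop :=
  ∀ c : Fin n, (∑ v : Fin m, (routes v).count c) = 1

/-- The maximum tour length over the sequences of a partition. -/
def maxTour {n m : ℕ} (d : Fin (n + 1) → Fin (n + 1) → ℝ)
    (routes : Fin m → List (Fin n)) : ℝ :=
  ((List.finRange m).map (fun v => tourLen d (routes v))).foldr max 0

/-- The min-max VRP value: the minimum, over partitions of the customers into at
most `m` ordered sequences, of the maximum tour length of a sequence. -/
noncomputable def minmaxVRP (n m : ℕ) (d : Fin (n + 1) → Fin (n + 1) → ℝ) : ℝ :=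
  sInf {T : ℝ | ∃ routes : Fin m → List (Fin n), IsPartition routes ∧ maxTour d routes = T}

/-- The optimal VRP-RPD makespan: the minimum makespan over feasible schedules. -/
noncomputable def optMakespan (n m : ℕ) (d : Fin (n + 1) → Fin (n + 1) → ℝ)
    (p : Fin n → ℝ) (kcap : ℕ) : ℝ :=
  sInf {T : ℝ | ∃ S : Schedule n m, Feasible d p kcap S ∧ makespan d S = T}

end VRPRPD

/-! A feasible schedule yields a partition by assigning each customer to the vehicle that
drops it off. The timing constraints bound a vehicle's return time below by the length of
the closed tour through all its stops, and by the triangle inequality skipping the pickup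
stops only shortens that tour. Conversely, when processing times vanish, a route is served
by a vehicle that drops off and immediately picks up at each of its customers: its load
alternates between `kcap` and `kcap - 1`, and it returns exactly after the tour length. -/

namespace VRPRPD

variable {n m : ℕ} {d : Fin (n + 1) → Fin (n + 1) → ℝ}

lemma foldr_max_zero_le_iff {l : List ℝ} {b : ℝ} :
    l.foldr max 0 ≤ b ↔ 0 ≤ b ∧ ∀ x ∈ l, x ≤ b := by
  induction l with
  | nil => simp
  | cons a l ih => simp only [List.foldr_cons, max_le_iff, ih, List.forall_mem_cons]; tauto

lemma returnTime_le_makespan (S : Schedule n m) (v : Fin m) :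
    returnTime d S v ≤ makespan d S :=
  (foldr_max_zero_le_iff.mp le_rfl).2 _ (List.mem_map_of_mem (List.mem_finRange v))

lemma makespan_nonneg (S : Schedule n m) : 0 ≤ makespan d S :=
  (foldr_max_zero_le_iff.mp le_rfl).1

@[simp] lemma pathLen_cons_cons (a b : Fin (n + 1)) (l : List (Fin (n + 1))) :
    pathLen d (a :: b :: l) = d a b + pathLen d (b :: l) := rfl

@[simp] lemma pathLen_singleton (a : Fin (n + 1)) : pathLen d [a] = 0 := rfl

lemma pathLen_cons_le (hd_tri : ∀ i l j, d i j ≤ d i l + d l j) (a b : Fin (n + 1))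
    {l : List (Fin (n + 1))} (hl : l ≠ []) :
    pathLen d (a :: l) ≤ d a b + pathLen d (b :: l) := by
  obtain ⟨x, l, rfl⟩ := List.exists_cons_of_ne_nil hl
  simp only [pathLen_cons_cons]
  linarith [hd_tri a b x]

lemma pathLen_le_of_sublist (hd_tri : ∀ i l j, d i j ≤ d i l + d l j)
    {l₁ l₂ : List (Fin (n + 1))} (h : l₁.Sublist l₂) (a b : Fin (n + 1)) :
    pathLen d (a :: l₁ ++ [b]) ≤ pathLen d (a :: l₂ ++ [b]) := by
  induction h generalizing a with
  | slnil => rfl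
  | cons x _ ih =>
    calc pathLen d (a :: _ ++ [b]) ≤ pathLen d (a :: _ ++ [b]) := ih a
      _ ≤ d a x + pathLen d (x :: _ ++ [b]) := pathLen_cons_le hd_tri a x (by simp)
  | cons_cons x _ ih => simpa using ih x

lemma tourLen_le_of_sublist (hd_tri : ∀ i l j, d i j ≤ d i l + d l j)
    {l₁ l₂ : List (Fin n)} (h₁ : l₁ ≠ []) (h : l₁.Sublist l₂) :
    tourLen d l₁ ≤ tourLen d l₂ := by
  obtain ⟨c, l₁, rfl⟩ := List.exists_cons_of_ne_nil h₁
  cases l₂ with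
  | nil => simp at h
  | cons c' l₂ => exact pathLen_le_of_sublist hd_tri (h.map loc) 0 0

def Reaches (d : Fin (n + 1) → Fin (n + 1) → ℝ) (e f : Entry n) : Prop :=
  e.dep + d (loc e.cust) (loc f.cust) ≤ f.arr

lemma isChain_reaches_iff (l : List (Entry n)) :
    l.IsChain (Reaches d) ↔ ∀ r : ℕ, (h : r + 1 < l.length) →
      (l.get ⟨r, Nat.lt_of_succ_lt h⟩).dep
        + d (loc (l.get ⟨r, Nat.lt_of_succ_lt h⟩).cust) (loc (l.get ⟨r + 1, h⟩).cust)
        ≤ (l.get ⟨r + 1, h⟩).arr := by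
  simp [List.isChain_iff_getElem, Reaches]

lemma arr_add_pathLen_le (e : Entry n) (es : List (Entry n))
    (hdep : ∀ f ∈ e :: es, f.arr ≤ f.dep) (hchain : (e :: es).IsChain (Reaches d))
    (z : Fin (n + 1)) :
    e.arr + pathLen d ((e :: es).map (fun f => loc f.cust) ++ [z])
      ≤ ((e :: es).getLast (List.cons_ne_nil e es)).dep
        + d (loc ((e :: es).getLast (List.cons_ne_nil e es)).cust) z := by
  induction es generalizing e with
  | nil => simpa using hdep e (by simp)
  | cons f es ih =>
    obtain ⟨hef, hchain⟩ := List.isChain_cons_cons.mp hchain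
    have hf := ih f (fun g hg => hdep g (List.mem_cons_of_mem e hg)) hchain
    have he := hdep e (by simp)
    unfold Reaches at hef
    simp only [List.map_cons, List.cons_append, pathLen_cons_cons, List.getLast_cons_cons] at hf ⊢
    linarith

lemma Feasible.tourLen_le_returnTime {p : Fin n → ℝ} {kcap : ℕ} {S : Schedule n m}
    (hF : Feasible d p kcap S) (v : Fin m) :
    tourLen d ((S v).map Entry.cust) ≤ returnTime d S v := by
  unfold returnTime
  cases hv : S v with
  | nil => simp [tourLen]
  | cons e es =>
    have hchain : (e :: es).IsChain (Reaches d) := hv ▸ (isChain_reaches_iff _).2 (hF.travel v)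
    have harr := arr_add_pathLen_le e es (hv ▸ hF.arr_le_dep v) hchain 0
    have hfirst : d 0 (loc e.cust) ≤ e.arr := hF.first_arr v e (by simp [hv])
    simp only [List.getLast?_eq_some_getLast (List.cons_ne_nil e es), tourLen, List.map_map,
      Function.comp_def]
    simp only [List.map_cons, List.cons_append, pathLen_cons_cons] at harr ⊢
    linarith

def dropCusts (es : List (Entry n)) : List (Fin n) :=
  (es.filter (fun e => e.kind = OpKind.drop)).map Entry.cust

lemma count_dropCusts (es : List (Entry n)) (c : Fin n) :
    (dropCusts es).count c
      = es.countP (fun e => decide (e.cust = c ∧ e.kind = OpKind.drop)) := by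
  simp only [dropCusts, List.count_eq_countP, List.countP_map, List.countP_filter]
  congr 1
  funext e
  simp only [Function.comp_apply, beq_eq_decide, Bool.decide_and]

lemma Feasible.exists_partition_maxTour_le_makespan {p : Fin n → ℝ} {kcap : ℕ}
    {S : Schedule n m} (hF : Feasible d p kcap S) (hd_tri : ∀ i l j, d i j ≤ d i l + d l j) :
    ∃ routes : Fin m → List (Fin n),
      IsPartition routes ∧ maxTour d routes ≤ makespan d S := by
  refine ⟨fun v => dropCusts (S v), fun c => ?_, ?_⟩
  · simpa only [count_dropCusts, countOp] using hF.drop_once c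
  refine foldr_max_zero_le_iff.mpr ⟨makespan_nonneg S, ?_⟩
  simp only [List.mem_map, List.mem_finRange, true_and, forall_exists_index,
    forall_apply_eq_imp_iff]
  intro v
  by_cases hv : dropCusts (S v) = []
  · simpa [hv, tourLen] using makespan_nonneg S
  calc tourLen d (dropCusts (S v)) ≤ tourLen d ((S v).map Entry.cust) :=
        tourLen_le_of_sublist hd_tri hv ((List.filter_sublist).map _)
    _ ≤ returnTime d S v := hF.tourLen_le_returnTime v
    _ ≤ makespan d S := returnTime_le_makespan S v

def serveRoute (d : Fin (n + 1) → Fin (n + 1) → ℝ) :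
    ℝ → Fin (n + 1) → List (Fin n) → List (Entry n)
  | _, _, [] => []
  | t, prev, c :: l =>
      ⟨c, .drop, t + d prev (loc c), t + d prev (loc c)⟩ ::
      ⟨c, .pick, t + d prev (loc c), t + d prev (loc c)⟩ ::
      serveRoute d (t + d prev (loc c)) (loc c) l

section serveRoute

variable {t : ℝ} {prev : Fin (n + 1)} {l : List (Fin n)} {e e' : Entry n}

lemma arr_head?_serveRoute (he : e ∈ (serveRoute d t prev l).head?) :
    e.arr = t + d prev (loc e.cust) := by
  cases l with
  | nil => simp [serveRoute] at he
  | cons c l =>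
    simp only [serveRoute, List.head?_cons, Option.mem_def, Option.some.injEq] at he
    rw [← he]

lemma isChain_serveRoute (hd_refl : ∀ i, d i i = 0) (t : ℝ) (prev : Fin (n + 1))
    (l : List (Fin n)) : (serveRoute d t prev l).IsChain (Reaches d) := by
  induction l generalizing t prev with
  | nil => exact .nil
  | cons c l ih =>
    refine List.isChain_cons_cons.mpr
      ⟨by simp [Reaches, hd_refl], List.isChain_cons.mpr ⟨?_, ih _ _⟩⟩
    intro f hf
    simp [Reaches, arr_head?_serveRoute hf]

lemma cust_mem_of_mem_serveRoute (he : e ∈ serveRoute d t prev l) : e.cust ∈ l := by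
  induction l generalizing t prev with
  | nil => simp [serveRoute] at he
  | cons c l ih =>
    simp only [serveRoute, List.mem_cons] at he
    rcases he with rfl | rfl | he
    · simp
    · simp
    · exact List.mem_cons_of_mem c (ih he)

lemma arr_eq_dep_of_mem_serveRoute (he : e ∈ serveRoute d t prev l) : e.arr = e.dep := by
  induction l generalizing t prev with
  | nil => simp [serveRoute] at he
  | cons c l ih =>
    simp only [serveRoute, List.mem_cons] at he
    rcases he with rfl | rfl | he
    · rfl
    · rfl
    · exact ih he

lemma countP_serveRoute (c : Fin n) (k : OpKind) (t : ℝ) (prev : Fin (n + 1))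
    (l : List (Fin n)) :
    (serveRoute d t prev l).countP (fun e => decide (e.cust = c ∧ e.kind = k)) = l.count c := by
  induction l generalizing t prev with
  | nil => simp [serveRoute]
  | cons c' l ih =>
    rw [serveRoute, List.countP_cons, List.countP_cons, ih, List.count_cons]
    cases k <;> by_cases hc : c' = c <;> simp [hc]

lemma loadAfter_take_serveRoute (kcap : ℕ) (t : ℝ) (prev : Fin (n + 1)) (l : List (Fin n))
    (r : ℕ) :
    (kcap : ℤ) - 1 ≤ loadAfter kcap ((serveRoute d t prev l).take r)
      ∧ loadAfter kcap ((serveRoute d t prev l).take r) ≤ kcap := by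
  induction l generalizing t prev r with
  | nil => simp [serveRoute, loadAfter]
  | cons c l ih =>
    match r with
    | 0 => simp [loadAfter]
    | 1 => simp [serveRoute, loadAfter]
    | r + 2 =>
      have := ih (t + d prev (loc c)) (loc c) r
      simp only [serveRoute, List.take_succ_cons, loadAfter, List.countP_cons] at this ⊢
      simp only [decide_true, reduceCtorEq, decide_false, if_true, if_false] at this ⊢
      omega

lemma arr_eq_of_mem_serveRoute {c : Fin n} (hc : l.count c ≤ 1)
    (he : e ∈ serveRoute d t prev l) (he' : e' ∈ serveRoute d t prev l)
    (hec : e.cust = c) (hec' : e'.cust = c) :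
    e.arr = e'.arr := by
  induction l generalizing t prev with
  | nil => simp [serveRoute] at he
  | cons c₀ l ih =>
    simp only [serveRoute, List.mem_cons] at he he'
    by_cases h₀ : c₀ = c
    · subst h₀
      have hnot : c₀ ∉ l := List.count_eq_zero.mp (by simpa [List.count_cons] using hc)
      have harr : ∀ f ∈ serveRoute d (t + d prev (loc c₀)) (loc c₀) l, f.cust ≠ c₀ :=
        fun f hf hfc => hnot (hfc ▸ cust_mem_of_mem_serveRoute hf)
      rcases he with rfl | rfl | he <;> rcases he' with rfl | rfl | he' <;>
        first | rfl | exact absurd hec (harr _ ‹_›) | exact absurd hec' (harr _ ‹_›)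
    · have hc' : l.count c ≤ 1 := by simpa [List.count_cons, h₀] using hc
      rcases he with rfl | rfl | he <;> rcases he' with rfl | rfl | he' <;>
        first | exact absurd hec h₀ | exact absurd hec' h₀ | exact ih hc' he he'

lemma exists_getLast?_serveRoute (hl : l ≠ []) :
    ∃ e, (serveRoute d t prev l).getLast? = some e
      ∧ e.dep + d (loc e.cust) 0 = t + pathLen d (prev :: l.map loc ++ [0]) := by
  induction l generalizing t prev with
  | nil => exact absurd rfl hl
  | cons c l ih =>
    cases l with
    | nil =>
      exact ⟨⟨c, .pick, t + d prev (loc c), t + d prev (loc c)⟩, rfl, by simp [add_assoc]⟩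
    | cons c₁ l =>
      obtain ⟨e, hlast, hdep⟩ :=
        ih (t := t + d prev (loc c)) (prev := loc c) (List.cons_ne_nil _ _)
      refine ⟨e, ?_, ?_⟩
      · simp only [serveRoute, List.getLast?_cons_cons] at hlast ⊢
        exact hlast
      · simp only [List.map_cons, List.cons_append, pathLen_cons_cons] at hdep ⊢
        linarith

end serveRoute

lemma returnTime_serveRoute (routes : Fin m → List (Fin n)) (v : Fin m) :
    returnTime d (fun v => serveRoute d 0 0 (routes v)) v = tourLen d (routes v) := by
  cases hv : routes v with
  | nil => simp [returnTime, hv, serveRoute, tourLen]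
  | cons c l =>
    obtain ⟨e, hlast, hdep⟩ := exists_getLast?_serveRoute (d := d) (t := 0) (prev := 0)
      (List.cons_ne_nil c l)
    simp only [returnTime, hv, hlast, hdep, zero_add, tourLen]

lemma IsPartition.count_le_one {routes : Fin m → List (Fin n)} (h : IsPartition routes)
    (v : Fin m) (c : Fin n) : (routes v).count c ≤ 1 :=
  h c ▸ Finset.single_le_sum (f := fun v => (routes v).count c) (fun _ _ => Nat.zero_le _)
    (Finset.mem_univ v)

lemma IsPartition.eq_of_mem_of_mem {routes : Fin m → List (Fin n)} (h : IsPartition routes)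
    {c : Fin n} {v w : Fin m} (hv : c ∈ routes v) (hw : c ∈ routes w) : v = w := by
  by_contra hvw
  have hsum := Finset.add_le_sum (f := fun v => (routes v).count c) (fun _ _ => Nat.zero_le _)
    (Finset.mem_univ v) (Finset.mem_univ w) hvw
  have := List.count_pos_iff.mpr hv
  have := List.count_pos_iff.mpr hw
  simp only [h c] at hsum
  omega

lemma IsPartition.exists_feasible_makespan_eq (hd_refl : ∀ i, d i i = 0) {p : Fin n → ℝ}
    (hp : ∀ c, p c = 0) {kcap : ℕ} (hk1 : 1 ≤ kcap) {routes : Fin m → List (Fin n)}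
    (hpart : IsPartition routes) :
    ∃ S : Schedule n m, Feasible d p kcap S ∧ makespan d S = maxTour d routes := by
  refine ⟨fun v => serveRoute d 0 0 (routes v), ⟨?_, ?_, ?_, ?_, ?_, ?_, ?_, ?_⟩, ?_⟩
  · intro c
    simpa only [countOp, countP_serveRoute] using hpart c
  · intro c
    simpa only [countOp, countP_serveRoute] using hpart c
  · exact fun v e he => (arr_eq_dep_of_mem_serveRoute he).le
  · intro v e he
    simp [arr_head?_serveRoute he]
  · exact fun v => (isChain_reaches_iff _).mp (isChain_serveRoute hd_refl 0 0 (routes v))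
  · intro v r
    have := loadAfter_take_serveRoute (d := d) kcap 0 0 (routes v) r
    omega
  · exact fun v r => (loadAfter_take_serveRoute kcap 0 0 (routes v) r).2
  · intro c v w eD eP hD hP hDc _ hPc _
    have hv : c ∈ routes v := hDc ▸ cust_mem_of_mem_serveRoute hD
    obtain rfl := hpart.eq_of_mem_of_mem hv (hPc ▸ cust_mem_of_mem_serveRoute hP)
    rw [hp c, add_zero, arr_eq_of_mem_serveRoute (hpart.count_le_one v c) hD hP hDc hPc]
    exact (arr_eq_dep_of_mem_serveRoute hP).le
  · unfold makespan maxTour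
    rw [funext (returnTime_serveRoute routes)]

theorem optMakespan_eq_minmaxVRP_general (n m kcap : ℕ)
    (d : Fin (n + 1) → Fin (n + 1) → ℝ) (p : Fin n → ℝ)
    (hd_refl : ∀ i, d i i = 0)
    (hd_tri : ∀ i l j, d i j ≤ d i l + d l j)
    (hp : ∀ c, p c = 0) (hk1 : 1 ≤ kcap) :
    optMakespan n m d p kcap = minmaxVRP n m d := by
  refine csInf_eq_csInf_of_forall_exists_le ?_ ?_
  · rintro _ ⟨S, hF, rfl⟩
    obtain ⟨routes, hpart, hle⟩ := hF.exists_partition_maxTour_le_makespan hd_tri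
    exact ⟨_, ⟨routes, hpart, rfl⟩, hle⟩
  · rintro _ ⟨routes, hpart, rfl⟩
    obtain ⟨S, hF, heq⟩ := hpart.exists_feasible_makespan_eq hd_refl hp hk1
    exact ⟨_, ⟨S, hF, rfl⟩, heq.le⟩

/-- With nonnegative travel times vanishing on the diagonal and
satisfying the triangle inequality, zero processing times, and non-binding
vehicle capacity `kcap ≥ n`, the optimal (minimum) makespan over all feasible
VRP-RPD schedules equals the min-max VRP value. This is the correctness of the
reduction used in the paper's NP-hardness proof. -/
theorem optMakespan_eq_minmaxVRP (n m kcap : ℕ)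
    (d : Fin (n + 1) → Fin (n + 1) → ℝ) (p : Fin n → ℝ)
    (hd_nonneg : ∀ i j, 0 ≤ d i j) (hd_refl : ∀ i, d i i = 0)
    (hd_tri : ∀ i l j, d i j ≤ d i l + d l j)
    (hp : ∀ c, p c = 0) (hk1 : 1 ≤ kcap) (hk : n ≤ kcap) :
    optMakespan n m d p kcap = minmaxVRP n m d :=
  optMakespan_eq_minmaxVRP_general n m kcap d p hd_refl hd_tri hp hk1

end VRPRPD
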